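/- (Gentle Measurement Lemma for ensembles) Let {p(x), ρ_x} be a finite ensemble of density operators with average ρ = Σ_x p(x) ρ_x, and let 0 ≤ Λ ≤ I satisfy Tr{Λρ} ≥ 1 − ε. Then Σ_x p(x) ‖√Λ ρ_x √Λ − ρ_x‖₁ ≤ 2√ε. -/

import Mathlib

/-!
For one state `ρ` put `T = √Λ`. The matrix `TρT - ρ` is Hermitian, so its trace norm is
`Tr (S (TρT - ρ))` for the involution `S = sign (TρT - ρ)`, and
`S (TρT - ρ) = (S T) ρ (T - 1) + (T - 1) ρ S` under the trace. Cauchy–Schwarz for the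
`ρ`-weighted inner product `⟪X, Y⟫ = Tr (Y ρ Xᴴ)` bounds each term by the `ρ`-norm of `T - 1`
(the other factors have `ρ`-norm at most `1`), and `(T - 1)² ≤ 1 - Λ` because `Λ ≤ √Λ` when
`0 ≤ Λ ≤ 1`. This gives `‖TρT - ρ‖₁ ≤ 2 √(1 - Tr Λρ)`. Over the ensemble, concavity of the square
root bounds `Σ p(x) 2 √(1 - Tr Λρₓ)` by `2 √(1 - Tr Λ Σ p(x) ρₓ) ≤ 2 √ε`.
-/

open Matrix
open scoped ComplexOrder

/-- The positive semidefinite square root, as defined in the older Mathlib. -/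
noncomputable def Matrix.PosSemidef.sqrt {n 𝕜 : Type*} [Fintype n] [RCLike 𝕜] [DecidableEq n]
    {A : Matrix n n 𝕜} (hA : A.PosSemidef) : Matrix n n 𝕜 :=
  hA.1.eigenvectorUnitary.1 * diagonal ((↑) ∘ (√·) ∘ hA.1.eigenvalues) *
    (star hA.1.eigenvectorUnitary : Matrix n n 𝕜)

/-- The trace norm `‖A‖₁ = Tr √(AᴴA)` of a complex matrix. -/
noncomputable def traceNorm {d : ℕ} (A : Matrix (Fin d) (Fin d) ℂ) : ℝ :=
  ((Matrix.posSemidef_conjTranspose_mul_self A).sqrt.trace).re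

/-- The Loewner order: `A ≤ B` iff `B - A` is positive semidefinite. -/
def Loewner {d : ℕ} (A B : Matrix (Fin d) (Fin d) ℂ) : Prop :=
  (B - A).PosSemidef

open scoped MatrixOrder

namespace Matrix

variable {n 𝕜 : Type*} [Fintype n] [DecidableEq n] [RCLike 𝕜]

lemma PosSemidef.sqrt_eq_cfcSqrt {A : Matrix n n 𝕜} (hA : A.PosSemidef) :
    hA.sqrt = CFC.sqrt A := by
  rw [CFC.sqrt_eq_real_sqrt A hA.nonneg, cfcₙ_eq_cfc, hA.1.cfc_eq, IsHermitian.cfc,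
    Unitary.conjStarAlgAut_apply]
  rfl

lemma le_cfcSqrt_of_nonneg_of_le_one {A : Matrix n n 𝕜} (h0 : 0 ≤ A) (h1 : A ≤ 1) :
    A ≤ CFC.sqrt A := by
  rw [CFC.sqrt_eq_real_sqrt A, cfcₙ_eq_cfc]
  conv_lhs => rw [← cfc_id' ℝ A]
  refine cfc_mono (f := fun x => x) (g := Real.sqrt) fun x hx => ?_
  have hx0 : 0 ≤ x := (StarOrderedRing.nonneg_iff_spectrum_nonneg A).mp h0 x hx
  have hx1 : x ≤ 1 := (CFC.le_one_iff A).mp h1 x hx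
  exact Real.le_sqrt_of_sq_le (by nlinarith)

lemma trace_mul_nonneg {A B : Matrix n n 𝕜} (hA : 0 ≤ A) (hB : 0 ≤ B) :
    0 ≤ (A * B).trace := by
  have hsqrt : (CFC.sqrt B)ᴴ = CFC.sqrt B := (CFC.sqrt_nonneg B).posSemidef.1
  have h := (hA.posSemidef.conjTranspose_mul_mul_same (CFC.sqrt B)).trace_nonneg
  rwa [hsqrt, ← trace_mul_cycle, Matrix.mul_assoc, CFC.sqrt_mul_sqrt_self B hB] at h

lemma re_trace_mul_le_re_trace {Λ ρ : Matrix n n 𝕜} (hρ : 0 ≤ ρ) (hΛ : Λ ≤ 1) :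
    RCLike.re (Λ * ρ).trace ≤ RCLike.re ρ.trace := by
  have h := (RCLike.nonneg_iff.mp (trace_mul_nonneg (sub_nonneg.mpr hΛ) hρ)).1
  rwa [Matrix.sub_mul, Matrix.one_mul, trace_sub, map_sub, sub_nonneg] at h

omit [DecidableEq n] in
lemma re_trace_mul_mul_conjTranspose_le {M : Matrix n n 𝕜} (hM : 0 ≤ M) (X Y : Matrix n n 𝕜) :
    RCLike.re (Y * M * Xᴴ).trace ≤
      √(RCLike.re (X * M * Xᴴ).trace) * √(RCLike.re (Y * M * Yᴴ).trace) := by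
  let := toMatrixSeminormedAddCommGroup M hM.posSemidef
  let := toMatrixInnerProductSpace M hM.posSemidef
  have hnorm : ∀ C : Matrix n n 𝕜, ‖C‖ = √(RCLike.re (C * M * Cᴴ).trace) := fun C =>
    norm_eq_sqrt_re_inner (𝕜 := 𝕜) C
  rw [← hnorm, ← hnorm]
  exact re_inner_le_norm X Y

lemma IsHermitian.exists_involution_mul_eq_cfcAbs {M : Matrix n n 𝕜} (hM : M.IsHermitian) :
    ∃ S : Matrix n n 𝕜, S.IsHermitian ∧ S * S = 1 ∧ S * M = CFC.abs M := by
  set s : ℝ → ℝ := fun x => if 0 ≤ x then 1 else -1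
  have hs : ContinuousOn s (spectrum ℝ M) := M.finite_real_spectrum.continuousOn _
  refine ⟨cfc s M, cfc_predicate s M, ?_, ?_⟩
  · rw [← cfc_mul s s M, ← cfc_one ℝ M]
    refine cfc_congr fun x _ => ?_
    by_cases hx : 0 ≤ x <;> simp [s, hx]
  · rw [CFC.abs_eq_cfc_norm M hM]
    conv_lhs => arg 2; rw [← cfc_id' ℝ M]
    rw [← cfc_mul s (fun x => x) M]
    refine cfc_congr fun x _ => ?_
    by_cases hx : 0 ≤ x
    · simp [s, hx, abs_of_nonneg hx]
    · simp [s, hx, abs_of_neg (not_le.mp hx)]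

lemma re_trace_cfcSqrt_sub_one_conj_le {ρ Λ : Matrix n n 𝕜} (hρ : 0 ≤ ρ) (hΛ0 : 0 ≤ Λ)
    (hΛ1 : Λ ≤ 1) :
    RCLike.re ((CFC.sqrt Λ - 1) * ρ * (CFC.sqrt Λ - 1)ᴴ).trace ≤
      RCLike.re ρ.trace - RCLike.re (Λ * ρ).trace := by
  have hgap := (RCLike.nonneg_iff.mp
    (trace_mul_nonneg (sub_nonneg.mpr (le_cfcSqrt_of_nonneg_of_le_one hΛ0 hΛ1)) hρ)).1
  set T := CFC.sqrt Λ
  have hT : Tᴴ = T := (CFC.sqrt_nonneg Λ).posSemidef.1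
  have hsq : (T - 1) * (T - 1) = 1 - Λ - (T - Λ) - (T - Λ) := by
    rw [← CFC.sqrt_mul_sqrt_self Λ]; noncomm_ring
  rw [conjTranspose_sub, conjTranspose_one, hT, trace_mul_cycle, hsq]
  simp only [Matrix.sub_mul, Matrix.one_mul, trace_sub, map_sub] at hgap ⊢
  linarith

lemma re_trace_mul_cfcSqrt_conj_sub_le {ρ Λ S : Matrix n n 𝕜} (hρ : 0 ≤ ρ) (hΛ0 : 0 ≤ Λ)
    (hΛ1 : Λ ≤ 1) (hS : S.IsHermitian) (hSS : S * S = 1) :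
    RCLike.re (S * (CFC.sqrt Λ * ρ * CFC.sqrt Λ - ρ)).trace ≤
      2 * √(RCLike.re ρ.trace) * √(RCLike.re ρ.trace - RCLike.re (Λ * ρ).trace) := by
  have hgap := Real.sqrt_le_sqrt (re_trace_cfcSqrt_sub_one_conj_le hρ hΛ0 hΛ1)
  have hΛρ := Real.sqrt_le_sqrt (re_trace_mul_le_re_trace hρ hΛ1)
  set T := CFC.sqrt Λ
  have hT : Tᴴ = T := (CFC.sqrt_nonneg Λ).posSemidef.1
  have hsplit : (S * (T * ρ * T - ρ)).trace =
      ((S * T) * ρ * (T - 1)ᴴ).trace + ((T - 1) * ρ * Sᴴ).trace := by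
    rw [conjTranspose_sub, conjTranspose_one, hT, hS.eq, trace_mul_cycle (T - 1), ← trace_add]
    congr 1
    noncomm_ring
  have hST : ((S * T) * ρ * (S * T)ᴴ).trace = (Λ * ρ).trace := by
    rw [conjTranspose_mul, hT, hS.eq, show S * T * ρ * (T * S) = S * (T * ρ * T) * S by
      noncomm_ring, trace_mul_cycle, hSS, Matrix.one_mul, trace_mul_cycle,
      CFC.sqrt_mul_sqrt_self Λ hΛ0]
  have hSρ : (S * ρ * Sᴴ).trace = ρ.trace := by
    rw [hS.eq, trace_mul_cycle, hSS, Matrix.one_mul]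
  have h1 := re_trace_mul_mul_conjTranspose_le hρ (T - 1) (S * T)
  have h2 := re_trace_mul_mul_conjTranspose_le hρ S (T - 1)
  rw [hST] at h1
  rw [hSρ] at h2
  rw [hsplit, map_add]
  calc _ ≤ _ := add_le_add h1 h2
    _ ≤ √(RCLike.re ρ.trace - RCLike.re (Λ * ρ).trace) * √(RCLike.re ρ.trace) +
          √(RCLike.re ρ.trace) * √(RCLike.re ρ.trace - RCLike.re (Λ * ρ).trace) :=
      add_le_add (mul_le_mul hgap hΛρ (Real.sqrt_nonneg _) (Real.sqrt_nonneg _))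
        (mul_le_mul_of_nonneg_left hgap (Real.sqrt_nonneg _))
    _ = _ := by ring

end Matrix

lemma traceNorm_eq_re_trace_cfcAbs {d : ℕ} (A : Matrix (Fin d) (Fin d) ℂ) :
    traceNorm A = (CFC.abs A).trace.re := by
  rw [traceNorm, CFC.abs, PosSemidef.sqrt_eq_cfcSqrt]
  rfl

lemma traceNorm_cfcSqrt_conj_sub_le {d : ℕ} {ρ Λ : Matrix (Fin d) (Fin d) ℂ} (hρ : 0 ≤ ρ)
    (hΛ0 : 0 ≤ Λ) (hΛ1 : Λ ≤ 1) :
    traceNorm (CFC.sqrt Λ * ρ * CFC.sqrt Λ - ρ) ≤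
      2 * √ρ.trace.re * √(ρ.trace.re - (Λ * ρ).trace.re) := by
  have hconj : 0 ≤ CFC.sqrt Λ * ρ * CFC.sqrt Λ := by
    simpa [(CFC.sqrt_nonneg Λ).isSelfAdjoint.star_eq] using
      star_left_conjugate_nonneg hρ (CFC.sqrt Λ)
  obtain ⟨S, hS, hSS, hSM⟩ :=
    (hconj.posSemidef.isHermitian.sub hρ.posSemidef.isHermitian).exists_involution_mul_eq_cfcAbs
  rw [traceNorm_eq_re_trace_cfcAbs, ← hSM]
  exact re_trace_mul_cfcSqrt_conj_sub_le hρ hΛ0 hΛ1 hS hSS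

theorem gentle_measurement_ensemble_general {d : ℕ} {X : Type} [Fintype X]
    (p : X → ℝ) (hp : ∀ x, 0 ≤ p x) (hp1 : ∑ x, p x = 1)
    (ρ : X → Matrix (Fin d) (Fin d) ℂ)
    (hρ : ∀ x, (ρ x).PosSemidef) (hρtr : ∀ x, (ρ x).trace = 1)
    (Λ : Matrix (Fin d) (Fin d) ℂ) (hΛ : Λ.PosSemidef) (hΛI : Loewner Λ 1)
    (ε : ℝ)
    (hsucc : 1 - ε ≤ ((Λ * ∑ x, (p x) • ρ x).trace).re) :
    ∑ x, p x * traceNorm (hΛ.sqrt * ρ x * hΛ.sqrt - ρ x) ≤ 2 * Real.sqrt ε := by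
  have hΛ1 : Λ ≤ 1 := hΛI
  set δ : X → ℝ := fun x => 1 - (Λ * ρ x).trace.re
  have hδ : ∀ x, 0 ≤ δ x := fun x => by
    simpa [δ, hρtr x] using re_trace_mul_le_re_trace (hρ x).nonneg hΛ1
  have hsingle : ∀ x, traceNorm (hΛ.sqrt * ρ x * hΛ.sqrt - ρ x) ≤ 2 * √(δ x) := fun x => by
    simpa [δ, hΛ.sqrt_eq_cfcSqrt, hρtr x] using
      traceNorm_cfcSqrt_conj_sub_le (hρ x).nonneg hΛ.nonneg hΛ1
  have hlin : ((Λ * ∑ x, p x • ρ x).trace).re = ∑ x, p x * (Λ * ρ x).trace.re := by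
    simp [Matrix.mul_sum, trace_sum]
  have hmean : ∑ x, p x • δ x ≤ ε := by
    simp only [δ, smul_eq_mul, mul_sub, mul_one, Finset.sum_sub_distrib, hp1]
    linarith
  calc ∑ x, p x * traceNorm (hΛ.sqrt * ρ x * hΛ.sqrt - ρ x)
      ≤ 2 * ∑ x, p x • √(δ x) := by
        rw [Finset.mul_sum]
        refine Finset.sum_le_sum fun x _ => ?_
        rw [smul_eq_mul, mul_left_comm]
        exact mul_le_mul_of_nonneg_left (hsingle x) (hp x)
    _ ≤ 2 * √(∑ x, p x • δ x) := by
        gcongr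
        exact Real.strictConcaveOn_sqrt.concaveOn.le_map_sum (fun x _ => hp x) hp1
          fun x _ => hδ x
    _ ≤ 2 * √ε := by gcongr

/-- Gentle Measurement Lemma for ensembles: if `0 ≤ Λ ≤ I` succeeds with probability
at least `1 − ε` on the average state `ρ = Σ_x p(x) ρ_x` of a finite ensemble of density
operators, then `Σ_x p(x) ‖√Λ ρ_x √Λ − ρ_x‖₁ ≤ 2√ε`. -/
theorem gentle_measurement_ensemble {d : ℕ} {X : Type} [Fintype X]
    (p : X → ℝ) (hp : ∀ x, 0 ≤ p x) (hp1 : ∑ x, p x = 1)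
    (ρ : X → Matrix (Fin d) (Fin d) ℂ)
    (hρ : ∀ x, (ρ x).PosSemidef) (hρtr : ∀ x, (ρ x).trace = 1)
    (Λ : Matrix (Fin d) (Fin d) ℂ) (hΛ : Λ.PosSemidef) (hΛI : Loewner Λ 1)
    (ε : ℝ) (hε : 0 ≤ ε) (hε1 : ε ≤ 1)
    (hsucc : 1 - ε ≤ ((Λ * ∑ x, (p x) • ρ x).trace).re) :
    ∑ x, p x * traceNorm (hΛ.sqrt * ρ x * hΛ.sqrt - ρ x) ≤ 2 * Real.sqrt ε :=
  gentle_measurement_ensemble_general p hp hp1 ρ hρ hρtr Λ hΛ hΛI ε hsucc
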